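/- In any connected conjunctive query Q (no free sequence, no nested clique in the renamed query) and any dominant relation Ṙ of a connected component E of G^∃_Q, head(Ṙ) ≠ ∅. -/

import Mathlib

open Set

/-- A conjunctive query: a set of relation atoms (indexed by `ι`), each with a
set of attributes, together with a set of output (head) attributes. -/
structure CQ (ι Attr : Type) where
  attrs : ι → Set Attr
  head : Set Attr

variable {ι κ Attr V : Type}

/-- A database for `Q`: for each relation, a set of tuples over its attributes. -/
def Db (Q : CQ ι Attr) (V : Type) : Type := ∀ i : ι, Set (↥(Q.attrs i) → V)

/-- Restriction (projection) of a full assignment to a set of attributes. -/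
def restrict (f : Attr → V) (S : Set Attr) : ↥S → V := fun a => f a.1

/-- Query evaluation: projections onto the head of all joint assignments
consistent with every relation. -/
def CQ.eval (Q : CQ ι Attr) (D : Db Q V) : Set (↥Q.head → V) :=
  { h | ∃ f : Attr → V, (∀ i, restrict f (Q.attrs i) ∈ D i) ∧ restrict f Q.head = h }

/-- Sub-database (componentwise inclusion). -/
def Db.le {Q : CQ ι Attr} (D' D : Db Q V) : Prop := ∀ i, D' i ⊆ D i

/-- A witness: a sub-database preserving the query result. -/
def IsWitness (Q : CQ ι Attr) (D D' : Db Q V) : Prop :=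
  Db.le D' D ∧ Q.eval D' = Q.eval D

/-- Total number of tuples of a database. -/
noncomputable def dbSize [Fintype ι] {Q : CQ ι Attr} (D : Db Q V) : ℕ :=
  ∑ i, (D i).ncard

/-- A smallest witness. -/
def IsSmallestWitness [Fintype ι] (Q : CQ ι Attr) (D D' : Db Q V) : Prop :=
  IsWitness Q D D' ∧ ∀ D'' : Db Q V, IsWitness Q D D'' → dbSize D' ≤ dbSize D''

/-- Adjacency in the existential-connectivity graph `G^∃_Q`: two relations are
adjacent if they share a non-output attribute. -/
def exAdj (Q : CQ ι Attr) (i j : ι) : Prop :=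
  ((Q.attrs i ∩ Q.attrs j) \ Q.head).Nonempty

/-- Vertices of `G^∃_Q`: relations containing a non-output attribute. -/
def IsExVertex (Q : CQ ι Attr) (i : ι) : Prop := (Q.attrs i \ Q.head).Nonempty

/-- `E` is a connected component of the existential-connectivity graph `G^∃_Q`. -/
def IsCompOf (Q : CQ ι Attr) (E : Set ι) : Prop :=
  E.Nonempty ∧ (∀ i ∈ E, IsExVertex Q i) ∧
  (∀ i ∈ E, ∀ j : ι, IsExVertex Q j → exAdj Q i j → j ∈ E) ∧
  (∀ i ∈ E, ∀ j ∈ E, Relation.ReflTransGen (fun a b => exAdj Q a b ∧ b ∈ E) i j)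

/-- `r` is a dominant relation for the set `E` of relations: every output
attribute appearing in a relation of `E` also appears in `r`. -/
def IsDominant (Q : CQ ι Attr) (E : Set ι) (r : ι) : Prop :=
  ∀ j ∈ E, Q.attrs j ∩ Q.head ⊆ Q.attrs r

/-- Adjacency in the connectivity graph `G_Q`: two relations are adjacent if
they share any attribute. -/
def connAdj (Q : CQ ι Attr) (i j : ι) : Prop := (Q.attrs i ∩ Q.attrs j).Nonempty

/-!
If the dominant relation `r` had no output attribute, neither would any relation of `E`. Then
every attribute shared by a relation of `E` with another relation is existential, so an edge of
`G_Q` leaving `E` would be an edge of `G^∃_Q` leaving the component. Hence `E` is closed in the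
connected graph `G_Q` and contains every relation, in particular one carrying an output attribute.
-/

theorem Relation.ReflTransGen.mem_of_forall_mem {α : Type*} {r : α → α → Prop} {S : Set α}
    (hS : ∀ a ∈ S, ∀ b, r a b → b ∈ S) {a b : α} (hab : Relation.ReflTransGen r a b)
    (ha : a ∈ S) : b ∈ S := by
  induction hab with
  | refl => exact ha
  | tail _ hbc ih => exact hS _ ih _ hbc

theorem IsDominant.disjoint_head {Q : CQ ι Attr} {E : Set ι} {r : ι} (hdom : IsDominant Q E r)
    (hr : Disjoint (Q.attrs r) Q.head) {j : ι} (hj : j ∈ E) : Disjoint (Q.attrs j) Q.head :=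
  Set.disjoint_left.mpr fun _ hx hxh => Set.disjoint_left.mp hr (hdom j hj ⟨hx, hxh⟩) hxh

theorem IsCompOf.mem_of_connAdj {Q : CQ ι Attr} {E : Set ι} (hE : IsCompOf Q E)
    (hno : ∀ j ∈ E, Disjoint (Q.attrs j) Q.head) {i j : ι} (hi : i ∈ E) (hij : connAdj Q i j) :
    j ∈ E := by
  obtain ⟨x, hxi, hxj⟩ := hij
  have hx : x ∉ Q.head := Set.disjoint_left.mp (hno i hi) hxi
  exact hE.2.2.1 i hi j ⟨x, hxj, hx⟩ ⟨x, ⟨hxi, hxj⟩, hx⟩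

theorem eq_univ_of_connAdj_closed {Q : CQ ι Attr}
    (hconn : ∀ i j : ι, Relation.ReflTransGen (connAdj Q) i j) {E : Set ι} (hne : E.Nonempty)
    (hclosed : ∀ i ∈ E, ∀ j, connAdj Q i j → j ∈ E) : E = Set.univ := by
  obtain ⟨i₀, hi₀⟩ := hne
  exact Set.eq_univ_of_forall fun j => (hconn i₀ j).mem_of_forall_mem hclosed hi₀

/-- In any connected conjunctive query `Q` (with nonempty head,
every head attribute occurring in some relation), for any connected component
`E` of `G^∃_Q` and any dominant relation `r` of `E`, `head(R_r) ≠ ∅`. -/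
theorem dominant_has_output_attribute (Q : CQ ι Attr)
    (hconn : ∀ i j : ι, Relation.ReflTransGen (connAdj Q) i j)
    (hhead : Q.head.Nonempty) (hcov : Q.head ⊆ ⋃ i : ι, Q.attrs i)
    (E : Set ι) (hE : IsCompOf Q E)
    (r : ι) (hdom : IsDominant Q E r) :
    (Q.attrs r ∩ Q.head).Nonempty := by
  rw [← Set.not_disjoint_iff_nonempty_inter]
  intro hr
  have hno : ∀ j ∈ E, Disjoint (Q.attrs j) Q.head := fun j hj => hdom.disjoint_head hr hj
  have hE_univ : E = Set.univ :=
    eq_univ_of_connAdj_closed hconn hE.1 fun i hi j hij => hE.mem_of_connAdj hno hi hij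
  obtain ⟨x, hx⟩ := hhead
  obtain ⟨j, hxj⟩ := Set.mem_iUnion.mp (hcov hx)
  exact Set.disjoint_left.mp (hno j (hE_univ ▸ Set.mem_univ j)) hxj hx
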